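/- arXiv:2512.17761 — 8 statements merged into one kernel-verified Lean document; each statement's English description precedes it below -/
import Mathlib

section
/- For the multigeometric sequence (1, 2\sqrt2 - 2; q) with q = (2-\sqrt2)/2, i.e., a_{2n-1} = q^n and a_{2n} = (2\sqrt2-2) q^n, we have r_{2n} < a_{2n} for all n \ge 1, where r_k = \sum_{i>k} a_i. -/
/-!
Past index `2n` the sequence splits into two geometric series of ratio `q`, so the tail is
`r_{2n} = q^{n+1} (1 + (2√2 - 2)) / (1 - q) = q^n (5 - 3√2)` with `1 - q = √2 / 2`, while
`a_{2n} = q^n (2√2 - 2)`; the inequality `5 - 3√2 < 2√2 - 2` is `7 < 5√2`, i.e. `49 < 50`.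
-/

theorem HasSum.of_even_odd_geometric {K : Type*} [NormedField K] [CompleteSpace K] {c d r : K}
    (hr : ‖r‖ < 1) {f : ℕ → K} (heven : ∀ j, f (2 * j) = c * r ^ j)
    (hodd : ∀ j, f (2 * j + 1) = d * r ^ j) : HasSum f ((c + d) / (1 - r)) := by
  have hgeom := hasSum_geometric_of_norm_lt_one hr
  have he : HasSum (fun j ↦ f (2 * j)) (c * (1 - r)⁻¹) := by
    simpa only [heven] using hgeom.mul_left c
  have ho : HasSum (fun j ↦ f (2 * j + 1)) (d * (1 - r)⁻¹) := by
    simpa only [hodd] using hgeom.mul_left d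
  simpa only [div_eq_mul_inv, add_mul] using he.even_add_odd ho

lemma sqrt_two_ratio_pos_lt_one {q : ℝ} (hq : q = (2 - √2) / 2) : 0 < q ∧ q < 1 := by
  have h2 : √2 ^ 2 = 2 := Real.sq_sqrt zero_le_two
  subst hq
  constructor <;> nlinarith [Real.sqrt_nonneg 2]

lemma sqrt_two_tail_ratio_lt {q : ℝ} (hq : q = (2 - √2) / 2) :
    (q + (2 * √2 - 2) * q) / (1 - q) < 2 * √2 - 2 := by
  have h2 : √2 ^ 2 = 2 := Real.sq_sqrt zero_le_two
  have h75 : 7 / 5 < √2 := by nlinarith [Real.sqrt_nonneg 2]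
  rw [div_lt_iff₀ (by linarith [(sqrt_two_ratio_pos_lt_one hq).2])]
  subst hq
  nlinarith

theorem stmt2_general (q : ℝ) (hq : q = (2 - Real.sqrt 2) / 2) (a : ℕ → ℝ)
    (hodd : ∀ n : ℕ, 1 ≤ n → a (2 * n - 1) = q ^ n)
    (heven : ∀ n : ℕ, 1 ≤ n → a (2 * n) = (2 * Real.sqrt 2 - 2) * q ^ n) :
    ∀ n : ℕ, 1 ≤ n → (∑' k : ℕ, a (2 * n + 1 + k)) < a (2 * n) := by
  intro n hn
  obtain ⟨hq0, hq1⟩ := sqrt_two_ratio_pos_lt_one hq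
  have htail : HasSum (fun k ↦ a (2 * n + 1 + k))
      ((q ^ (n + 1) + (2 * √2 - 2) * q ^ (n + 1)) / (1 - q)) := by
    refine HasSum.of_even_odd_geometric (by rwa [Real.norm_of_nonneg hq0.le]) (fun j ↦ ?_)
      (fun j ↦ ?_)
    · rw [← pow_add, ← hodd (n + 1 + j) (by omega)]
      congr 1
      omega
    · rw [mul_assoc, ← pow_add, ← heven (n + 1 + j) (by omega)]
      congr 1
      omega
  rw [htail.tsum_eq, heven n hn]
  calc _ = q ^ n * ((q + (2 * √2 - 2) * q) / (1 - q)) := by ring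
    _ < q ^ n * (2 * √2 - 2) := mul_lt_mul_of_pos_left (sqrt_two_tail_ratio_lt hq) (pow_pos hq0 n)
    _ = _ := mul_comm _ _

/-- For the multigeometric sequence `(1, 2√2 - 2; q)` with `q = (2-√2)/2`,
we have `r (2n) < a (2n)` for all `n ≥ 1`. -/
theorem stmt2 (q : ℝ) (hq : q = (2 - Real.sqrt 2) / 2) (a : ℕ → ℝ) (hsum : Summable a)
    (hodd : ∀ n : ℕ, 1 ≤ n → a (2 * n - 1) = q ^ n)
    (heven : ∀ n : ℕ, 1 ≤ n → a (2 * n) = (2 * Real.sqrt 2 - 2) * q ^ n) :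
    ∀ n : ℕ, 1 ≤ n → (∑' k : ℕ, a (2 * n + 1 + k)) < a (2 * n) :=
  stmt2_general q hq a hodd heven
end

section
/- For the multigeometric sequence (1, 2\sqrt2 - 2; q) with q = (2-\sqrt2)/2, we have r_{2n-1} > a_{2n-1} for all n \ge 1, where r_k = \sum_{i>k} a_i. -/
/-! The tail after an odd index of a multigeometric sequence `(c, d; q)` splits into its even
and odd terms, two geometric series, so `r (2n-1) = (d + c q) q^n / (1 - q)`. With `c = 1`,
`d = 2√2 - 2` and `q = (2 - √2)/2` this exceeds `a (2n-1) = q^n` because `d + 2q = √2 > 1`. -/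

theorem hasSum_multigeometric_tail {a : ℕ → ℝ} {c d q : ℝ} (hq : |q| < 1)
    (hodd : ∀ n : ℕ, 1 ≤ n → a (2 * n - 1) = c * q ^ n)
    (heven : ∀ n : ℕ, 1 ≤ n → a (2 * n) = d * q ^ n) {n : ℕ} (hn : 1 ≤ n) :
    HasSum (fun k => a (2 * n + k)) ((d + c * q) * q ^ n / (1 - q)) := by
  have hgeom := hasSum_geometric_of_abs_lt_one hq
  have hsumEven : HasSum (fun k => a (2 * n + 2 * k)) (d * q ^ n * (1 - q)⁻¹) := by
    have h : (fun k => a (2 * n + 2 * k)) = fun k => d * q ^ n * q ^ k := by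
      funext k
      rw [← mul_add, heven (n + k) (by omega), pow_add, mul_assoc]
    rw [h]
    exact hgeom.mul_left _
  have hsumOdd : HasSum (fun k => a (2 * n + (2 * k + 1))) (c * q * q ^ n * (1 - q)⁻¹) := by
    have h : (fun k => a (2 * n + (2 * k + 1))) = fun k => c * q * q ^ n * q ^ k := by
      funext k
      rw [show 2 * n + (2 * k + 1) = 2 * (n + k + 1) - 1 by omega, hodd (n + k + 1) (by omega)]
      ring
    rw [h]
    exact hgeom.mul_left _
  have hsplit := HasSum.even_add_odd (f := fun k => a (2 * n + k)) hsumEven hsumOdd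
  convert hsplit using 1
  ring

theorem stmt3_general (q : ℝ) (hq : q = (2 - Real.sqrt 2) / 2) (a : ℕ → ℝ)
    (hodd : ∀ n : ℕ, 1 ≤ n → a (2 * n - 1) = q ^ n)
    (heven : ∀ n : ℕ, 1 ≤ n → a (2 * n) = (2 * Real.sqrt 2 - 2) * q ^ n) :
    ∀ n : ℕ, 1 ≤ n → (∑' k : ℕ, a (2 * n + k)) > a (2 * n - 1) := by
  intro n hn
  have hsqrt : Real.sqrt 2 ^ 2 = 2 := Real.sq_sqrt zero_le_two
  have hsqrt_gt : 1 < Real.sqrt 2 := by nlinarith [Real.sqrt_nonneg 2]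
  have hq_pos : 0 < q := by nlinarith
  have hq_lt : q < 1 := by linarith
  have htail := hasSum_multigeometric_tail (c := 1) (abs_lt.mpr ⟨by linarith, hq_lt⟩)
    (by simpa using hodd) heven hn
  rw [htail.tsum_eq, hodd n hn, gt_iff_lt, lt_div_iff₀ (by linarith)]
  have hcoeff : 1 - q < 2 * Real.sqrt 2 - 2 + 1 * q := by linarith
  rw [mul_comm]
  exact mul_lt_mul_of_pos_right hcoeff (pow_pos hq_pos n)

/-- For the multigeometric sequence `(1, 2√2 - 2; q)` with `q = (2-√2)/2`,
we have `r (2n-1) > a (2n-1)` for all `n ≥ 1`. -/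
theorem stmt3 (q : ℝ) (hq : q = (2 - Real.sqrt 2) / 2) (a : ℕ → ℝ) (hsum : Summable a)
    (hodd : ∀ n : ℕ, 1 ≤ n → a (2 * n - 1) = q ^ n)
    (heven : ∀ n : ℕ, 1 ≤ n → a (2 * n) = (2 * Real.sqrt 2 - 2) * q ^ n) :
    ∀ n : ℕ, 1 ≤ n → (∑' k : ℕ, a (2 * n + k)) > a (2 * n - 1) :=
  stmt3_general q hq a hodd heven
end

section
/- For the multigeometric sequence (4,3,2;q) with q \in [1/6, 2/11), we have r_{3n-1} > a_{3n-1} and r_{3n-2} > a_{3n-2} for all n \ge 1. -/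
/-! All terms are nonnegative, so each tail dominates its first few terms:
`r (3n-1) ≥ 2qⁿ + 7qⁿ⁺¹ > 3qⁿ` because `7q > 1`, and `r (3n-2) ≥ 3qⁿ + 2qⁿ > 4qⁿ`. -/

open Finset

lemma sum_range_le_tsum_nat_add {f : ℕ → ℝ} (hf : Summable f) {m : ℕ}
    (hnn : ∀ i, m ≤ i → 0 ≤ f i) (j : ℕ) :
    ∑ k ∈ range j, f (m + k) ≤ ∑' k, f (m + k) :=
  (hf.comp_injective (add_right_injective m)).sum_le_tsum _
    (fun k _ => hnn _ (Nat.le_add_right m k))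

section Multigeometric

variable {q : ℝ} {a : ℕ → ℝ}
  (h1 : ∀ n : ℕ, 1 ≤ n → a (3 * n - 2) = 4 * q ^ n)
  (h2 : ∀ n : ℕ, 1 ≤ n → a (3 * n - 1) = 3 * q ^ n)
  (h3 : ∀ n : ℕ, 1 ≤ n → a (3 * n) = 2 * q ^ n)
include h1 h2 h3

lemma multigeometric_nonneg (hq : 0 ≤ q) {m : ℕ} (hm : 1 ≤ m) : 0 ≤ a m := by
  obtain ⟨n, hn, rfl | rfl | rfl⟩ : ∃ n, 1 ≤ n ∧ (m = 3 * n - 2 ∨ m = 3 * n - 1 ∨ m = 3 * n) :=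
    ⟨(m + 2) / 3, by omega, by omega⟩
  · rw [h1 n hn]; positivity
  · rw [h2 n hn]; positivity
  · rw [h3 n hn]; positivity

end Multigeometric

/-- For the multigeometric sequence `(4,3,2;q)` with `q ∈ [1/6, 2/11)`,
we have `r (3n-1) > a (3n-1)` and `r (3n-2) > a (3n-2)` for all `n ≥ 1`. -/
theorem stmt6 (q : ℝ) (hq : q ∈ Set.Ico (1/6 : ℝ) (2/11)) (a : ℕ → ℝ) (hsum : Summable a)
    (h1 : ∀ n : ℕ, 1 ≤ n → a (3 * n - 2) = 4 * q ^ n)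
    (h2 : ∀ n : ℕ, 1 ≤ n → a (3 * n - 1) = 3 * q ^ n)
    (h3 : ∀ n : ℕ, 1 ≤ n → a (3 * n) = 2 * q ^ n) :
    ∀ n : ℕ, 1 ≤ n →
      (∑' k : ℕ, a (3 * n + k)) > a (3 * n - 1) ∧
      (∑' k : ℕ, a (3 * n - 1 + k)) > a (3 * n - 2) := by
  intro n hn
  have hq0 : 0 ≤ q := by linarith [hq.1]
  have hqn : 0 < q ^ n := pow_pos (by linarith [hq.1]) n
  have hnn : ∀ i, 3 * n - 1 ≤ i → 0 ≤ a i :=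
    fun i hi => multigeometric_nonneg h1 h2 h3 hq0 (by omega)
  have e1 : a (3 * n + 1) = 4 * q ^ (n + 1) := by
    rw [show 3 * n + 1 = 3 * (n + 1) - 2 by omega, h1 (n + 1) (by omega)]
  have e2 : a (3 * n + 2) = 3 * q ^ (n + 1) := by
    rw [show 3 * n + 2 = 3 * (n + 1) - 1 by omega, h2 (n + 1) (by omega)]
  have e3 : a (3 * n - 1 + 1) = 2 * q ^ n := by
    rw [show 3 * n - 1 + 1 = 3 * n by omega, h3 n hn]
  constructor
  · calc a (3 * n - 1) = 3 * q ^ n := h2 n hn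
      _ < 2 * q ^ n + 4 * q ^ (n + 1) + 3 * q ^ (n + 1) := by
        rw [pow_succ]; nlinarith [hq.1]
      _ = ∑ k ∈ range 3, a (3 * n + k) := by
        simp only [sum_range_succ, sum_range_zero, add_zero, zero_add, h3 n hn, e1, e2]
      _ ≤ _ := sum_range_le_tsum_nat_add hsum (fun i hi => hnn i (by omega)) 3
  · calc a (3 * n - 2) = 4 * q ^ n := h1 n hn
      _ < 3 * q ^ n + 2 * q ^ n := by linarith
      _ = ∑ k ∈ range 2, a (3 * n - 1 + k) := by
        simp only [sum_range_succ, sum_range_zero, add_zero, zero_add, h2 n hn, e3]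
      _ ≤ _ := sum_range_le_tsum_nat_add hsum hnn 2
end

section
/- Let q = (\sqrt{57}-5)/16 and consider the sequence (4,3,2;q): a_{3n-2}=4q^n, a_{3n-1}=3q^n, a_{3n}=2q^n. Then r_{3n} < a_{3n}, r_{3n-1} > a_{3n-1}, and r_{3n-2} > a_{3n-2} for all n \ge 1, where r_k = \sum_{i>k} a_i. -/
/-!
Grouping the terms of `(x, y, z; q)` in blocks of three turns every tail `r_{3n}` into the
geometric series `(x + y + z) q^{n+1} / (1 - q)`, and `r_{3n-1}`, `r_{3n-2}` exceed it by
`a_{3n}` and `a_{3n-1} + a_{3n}`. For `(4, 3, 2; q)` the three inequalities then reduce to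
`11 q < 2`, `10 q > 1` and a trivially true one, and `q = (√57 - 5)/16 ≈ 0.164` lies in `(1/10, 2/11)`.
-/

theorem HasSum.nat_add_cons {M : Type*} [AddCommMonoid M] [TopologicalSpace M] [ContinuousAdd M]
    {a : ℕ → M} {N : ℕ} {s : M} (h : HasSum (fun k => a (N + 1 + k)) s) :
    HasSum (fun k => a (N + k)) (a N + s) := by
  simpa using HasSum.zero_add (f := fun k => a (N + k)) (by simpa [add_assoc, add_comm 1] using h)

section Geometric

variable {𝕜 : Type*} [NormedField 𝕜] [CompleteSpace 𝕜]

theorem hasSum_of_blockwise_geometric {p : ℕ} [NeZero p] {q : 𝕜} (hq : ‖q‖ < 1)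
    {a : ℕ → 𝕜} (w : Fin p → 𝕜) (ha : ∀ (m : ℕ) (j : Fin p), a (m * p + j) = q ^ m * w j) :
    HasSum a ((1 - q)⁻¹ * ∑ j, w j) := by
  have hprod : HasSum (fun x : ℕ × Fin p => q ^ x.1 * w x.2) ((1 - q)⁻¹ * ∑ j, w j) :=
    (hasSum_geometric_of_norm_lt_one hq).mul (hasSum_fintype w)
      (summable_mul_of_summable_norm (summable_norm_geometric_of_norm_lt_one hq)
        (Summable.of_finite))
  rw [← (Nat.divModEquiv p).symm.hasSum_iff]
  convert hprod using 2 with x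
  simp [ha]

theorem multigeometric_tail_hasSum {q : 𝕜} (hq : ‖q‖ < 1) {a : ℕ → 𝕜} {x y z : 𝕜}
    (h1 : ∀ n : ℕ, 1 ≤ n → a (3 * n - 2) = x * q ^ n)
    (h2 : ∀ n : ℕ, 1 ≤ n → a (3 * n - 1) = y * q ^ n)
    (h3 : ∀ n : ℕ, 1 ≤ n → a (3 * n) = z * q ^ n) (n : ℕ) :
    HasSum (fun k => a (3 * n + 1 + k)) ((x + y + z) * q ^ (n + 1) * (1 - q)⁻¹) := by
  have := hasSum_of_blockwise_geometric hq (a := fun k => a (3 * n + 1 + k))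
    ![x * q ^ (n + 1), y * q ^ (n + 1), z * q ^ (n + 1)] fun m j => by
      fin_cases j
      · rw [show 3 * n + 1 + (m * 3 + 0) = 3 * (n + m + 1) - 2 by omega, h1 _ (by omega)]
        simp only [Fin.zero_eta, Matrix.cons_val_zero]; ring
      · rw [show 3 * n + 1 + (m * 3 + 1) = 3 * (n + m + 1) - 1 by omega, h2 _ (by omega)]
        simp only [Fin.mk_one, Matrix.cons_val_one, Matrix.cons_val_zero]; ring
      · rw [show 3 * n + 1 + (m * 3 + 2) = 3 * (n + m + 1) by omega, h3 _ (by omega)]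
        simp only [Fin.reduceFinMk, Matrix.cons_val]; ring
  convert this using 1
  simp only [Fin.sum_univ_three, Matrix.cons_val_zero, Matrix.cons_val_one, Matrix.cons_val_two,
    Matrix.tail_cons, Matrix.head_cons]
  ring

end Geometric

theorem sqrt57_sub_five_div_sixteen_mem_Ioo : (√57 - 5) / 16 ∈ Set.Ioo (1 / 10 : ℝ) (2 / 11) := by
  have hlo : (33 / 5 : ℝ) < √57 := by rw [Real.lt_sqrt (by norm_num)]; norm_num
  have hhi : √57 < 87 / 11 := by rw [Real.sqrt_lt' (by norm_num)]; norm_num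
  constructor <;> linarith

theorem stmt10_general (q : ℝ) (hq : q = (Real.sqrt 57 - 5) / 16) (a : ℕ → ℝ)
    (h1 : ∀ n : ℕ, 1 ≤ n → a (3 * n - 2) = 4 * q ^ n)
    (h2 : ∀ n : ℕ, 1 ≤ n → a (3 * n - 1) = 3 * q ^ n)
    (h3 : ∀ n : ℕ, 1 ≤ n → a (3 * n) = 2 * q ^ n) :
    ∀ n : ℕ, 1 ≤ n →
      (∑' k : ℕ, a (3 * n + 1 + k)) < a (3 * n) ∧
      (∑' k : ℕ, a (3 * n + k)) > a (3 * n - 1) ∧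
      (∑' k : ℕ, a (3 * n - 1 + k)) > a (3 * n - 2) := by
  obtain ⟨hq_lo, hq_hi⟩ : q ∈ Set.Ioo (1 / 10) (2 / 11) := hq ▸ sqrt57_sub_five_div_sixteen_mem_Ioo
  have hc : 1 < 9 * q / (1 - q) ∧ 9 * q / (1 - q) < 2 := by
    constructor
    · rw [lt_div_iff₀ (by linarith)]; linarith
    · rw [div_lt_iff₀ (by linarith)]; linarith
  intro n hn
  have hr₀ := multigeometric_tail_hasSum
    (by rw [Real.norm_eq_abs, abs_lt]; constructor <;> linarith) h1 h2 h3 n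
  have hr₁ := hr₀.nat_add_cons
  have hr₂ : HasSum (fun k => a (3 * n - 1 + k)) (a (3 * n - 1) + (a (3 * n) + _)) :=
    HasSum.nat_add_cons (by rwa [show 3 * n - 1 + 1 = 3 * n by omega])
  have hs : (4 + 3 + 2) * q ^ (n + 1) * (1 - q)⁻¹ = q ^ n * (9 * q / (1 - q)) := by ring
  have hqn : 0 < q ^ n := by positivity
  have hlo := mul_lt_mul_of_pos_left hc.1 hqn
  have hhi := mul_lt_mul_of_pos_left hc.2 hqn
  rw [hr₀.tsum_eq, hr₁.tsum_eq, hr₂.tsum_eq, h1 n hn, h2 n hn, h3 n hn, hs]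
  refine ⟨?_, ?_, ?_⟩ <;> linarith

/-- For the multigeometric sequence `(4,3,2;q)` with `q = (√57-5)/16`, for all `n ≥ 1`:
`r (3n) < a (3n)`, `r (3n-1) > a (3n-1)` and `r (3n-2) > a (3n-2)`. -/
theorem stmt10 (q : ℝ) (hq : q = (Real.sqrt 57 - 5) / 16) (a : ℕ → ℝ) (hsum : Summable a)
    (h1 : ∀ n : ℕ, 1 ≤ n → a (3 * n - 2) = 4 * q ^ n)
    (h2 : ∀ n : ℕ, 1 ≤ n → a (3 * n - 1) = 3 * q ^ n)
    (h3 : ∀ n : ℕ, 1 ≤ n → a (3 * n) = 2 * q ^ n) :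
    ∀ n : ℕ, 1 ≤ n →
      (∑' k : ℕ, a (3 * n + 1 + k)) < a (3 * n) ∧
      (∑' k : ℕ, a (3 * n + k)) > a (3 * n - 1) ∧
      (∑' k : ℕ, a (3 * n - 1 + k)) > a (3 * n - 2) :=
  stmt10_general q hq a h1 h2 h3
end

section
/- Consider the sequence a_{3n-2} = (1/2)\cdot 8^{1-n}, a_{3n-1} = (3/8)\cdot 8^{1-n}, a_{3n} = (1/4)\cdot 8^{1-n} (i.e., the multigeometric sequence (4,3,2;1/8) up to scaling). Then a_n > r_n if and only if 3 | n, where r_n is the n-th remainder. -/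
/-!
For `m ≥ 1` we have `a (m + 3) = a m / 8`, so the tail `r n` satisfies
`r n = a (n + 1) + a (n + 2) + a (n + 3) + r n / 8`, i.e. `r n = 8/7 (a (n + 1) + a (n + 2) + a (n + 3))`.
With `a (n + 3) = a n / 8` again, `a n > r n` becomes `4 (a (n + 1) + a (n + 2)) < 3 a n`,
which for the ratios `4 : 3 : 2` holds exactly at the multiples of `3`.
-/

open Finset

theorem tsum_eq_sum_range_div_one_sub_of_add_eq_mul {K : Type*} [Field K] [TopologicalSpace K]
    [IsTopologicalRing K] [T2Space K] {f : ℕ → K} {p : ℕ} {c : K}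
    (hf : Summable f) (hc : c ≠ 1) (hrec : ∀ m, f (m + p) = c * f m) :
    ∑' m, f m = (∑ i ∈ range p, f i) / (1 - c) := by
  have hsplit := hf.sum_add_tsum_nat_add p
  simp only [hrec, tsum_mul_left] at hsplit
  rw [eq_div_iff (sub_ne_zero.2 hc.symm)]
  linear_combination -hsplit

section MultigeometricSequence

variable {a : ℕ → ℝ}

theorem tsum_tail_eq_of_add_three_eq_div_eight (hsum : Summable a)
    (hrec : ∀ m, 1 ≤ m → a (m + 3) = a m / 8) (n : ℕ) :
    ∑' k, a (n + 1 + k) = 8 / 7 * (a (n + 1) + a (n + 2) + a (n + 3)) := by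
  have htail : Summable fun k ↦ a (n + 1 + k) := by
    simpa only [add_comm] using (summable_nat_add_iff (n + 1)).2 hsum
  rw [tsum_eq_sum_range_div_one_sub_of_add_eq_mul htail (c := 1 / 8) (p := 3) (by norm_num)
    fun m ↦ by rw [← add_assoc, hrec _ (by omega)]; ring]
  simp only [sum_range_succ, sum_range_zero]
  ring_nf

theorem tail_lt_iff_of_add_three_eq_div_eight (hsum : Summable a)
    (hrec : ∀ m, 1 ≤ m → a (m + 3) = a m / 8) {n : ℕ} (hn : 1 ≤ n) :
    ∑' k, a (n + 1 + k) < a n ↔ 4 * (a (n + 1) + a (n + 2)) < 3 * a n := by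
  rw [tsum_tail_eq_of_add_three_eq_div_eight hsum hrec, hrec n hn]
  constructor <;> intro h <;> linarith

theorem add_three_eq_div_eight_of_closed_forms
    (hA : ∀ j, a (3 * j + 1) = 1 / 2 * (1 / 8) ^ j)
    (hB : ∀ j, a (3 * j + 2) = 3 / 8 * (1 / 8) ^ j)
    (hC : ∀ j, a (3 * j + 3) = 1 / 4 * (1 / 8) ^ j) {m : ℕ} (hm : 1 ≤ m) :
    a (m + 3) = a m / 8 := by
  obtain ⟨j, rfl | rfl | rfl⟩ : ∃ j, m = 3 * j + 1 ∨ m = 3 * j + 2 ∨ m = 3 * j + 3 :=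
    ⟨(m - 1) / 3, by omega⟩
  · rw [show 3 * j + 1 + 3 = 3 * (j + 1) + 1 by ring, hA, hA, pow_succ]; ring
  · rw [show 3 * j + 2 + 3 = 3 * (j + 1) + 2 by ring, hB, hB, pow_succ]; ring
  · rw [show 3 * j + 3 + 3 = 3 * (j + 1) + 3 by ring, hC, hC, pow_succ]; ring

theorem lt_iff_three_dvd_of_closed_forms
    (hA : ∀ j, a (3 * j + 1) = 1 / 2 * (1 / 8) ^ j)
    (hB : ∀ j, a (3 * j + 2) = 3 / 8 * (1 / 8) ^ j)
    (hC : ∀ j, a (3 * j + 3) = 1 / 4 * (1 / 8) ^ j) {n : ℕ} (hn : 1 ≤ n) :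
    4 * (a (n + 1) + a (n + 2)) < 3 * a n ↔ 3 ∣ n := by
  have hrec {m : ℕ} (hm : 1 ≤ m) := add_three_eq_div_eight_of_closed_forms hA hB hC hm
  obtain ⟨j, rfl | rfl | rfl⟩ : ∃ j, n = 3 * j + 1 ∨ n = 3 * j + 2 ∨ n = 3 * j + 3 :=
    ⟨(n - 1) / 3, by omega⟩
  all_goals have hq : (0 : ℝ) < (1 / 8) ^ j := by positivity
  · rw [hA, show 3 * j + 1 + 1 = 3 * j + 2 by ring, hB, show 3 * j + 1 + 2 = 3 * j + 3 by ring, hC]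
    simp only [show ¬3 ∣ 3 * j + 1 by omega, iff_false, not_lt]
    linarith
  · rw [hB, show 3 * j + 2 + 1 = 3 * j + 3 by ring, hC, show 3 * j + 2 + 2 = 3 * j + 1 + 3 by ring,
      hrec (by omega), hA]
    simp only [show ¬3 ∣ 3 * j + 2 by omega, iff_false, not_lt]
    linarith
  · rw [hC, show 3 * j + 3 + 1 = 3 * j + 1 + 3 by ring, hrec (by omega), hA,
      show 3 * j + 3 + 2 = 3 * j + 2 + 3 by ring, hrec (by omega), hB]
    simp only [show 3 ∣ 3 * j + 3 by omega, iff_true]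
    linarith

end MultigeometricSequence

/-- For the sequence `(4,3,2;1/8)` scaled so that `a_1 = 1/2`, `a_2 = 3/8`, `a_3 = 1/4`,
i.e. `a (3n-2) = (1/2)·8^{1-n}`, `a (3n-1) = (3/8)·8^{1-n}`, `a (3n) = (1/4)·8^{1-n}`,
we have `a n > r n` if and only if `3 ∣ n`. -/
theorem stmt13 (a : ℕ → ℝ) (hsum : Summable a)
    (h1 : ∀ n : ℕ, 1 ≤ n → a (3 * n - 2) = (1/2) * (1/8 : ℝ) ^ (n - 1))
    (h2 : ∀ n : ℕ, 1 ≤ n → a (3 * n - 1) = (3/8) * (1/8 : ℝ) ^ (n - 1))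
    (h3 : ∀ n : ℕ, 1 ≤ n → a (3 * n) = (1/4) * (1/8 : ℝ) ^ (n - 1)) :
    ∀ n : ℕ, 1 ≤ n → (a n > ∑' k : ℕ, a (n + 1 + k) ↔ 3 ∣ n) := by
  have hA (j : ℕ) : a (3 * j + 1) = 1 / 2 * (1 / 8) ^ j := by
    simpa [show 3 * (j + 1) - 2 = 3 * j + 1 by omega] using h1 (j + 1) (by omega)
  have hB (j : ℕ) : a (3 * j + 2) = 3 / 8 * (1 / 8) ^ j := by
    simpa [show 3 * (j + 1) - 1 = 3 * j + 2 by omega] using h2 (j + 1) (by omega)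
  have hC (j : ℕ) : a (3 * j + 3) = 1 / 4 * (1 / 8) ^ j := by
    simpa [mul_add] using h3 (j + 1) (by omega)
  intro n hn
  rw [gt_iff_lt, tail_lt_iff_of_add_three_eq_div_eight hsum
    (fun _ ↦ add_three_eq_div_eight_of_closed_forms hA hB hC) hn]
  exact lt_iff_three_dvd_of_closed_forms hA hB hC hn
end

section
/- Let (a_n) be defined by a_1 = 3/4, a_{2n} = (1/2)\cdot 4^{1-n}, a_{2n+1} = (3/4)\cdot 4^{-n} (the Guthrie–Nymann sequence (3,2;1/4)). Then a_n > r_n if and only if n is even, where r_n = \sum_{k>n} a_k. -/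
/-!
Both subsequences of `a` are geometric with ratio `1/4`, so every tail splits into two geometric
series: writing `c = (1/4)^m`, the tail after `a (2m+1) = (3/4) c` is `(11/12) c`, while the tail
after `a (2m+2) = (1/2) c` is `(5/12) c`.
-/

lemma hasSum_of_even_odd_geometric {f : ℕ → ℝ} {x y q : ℝ} (hq : |q| < 1)
    (heven : ∀ j, f (2 * j) = x * q ^ j) (hodd : ∀ j, f (2 * j + 1) = y * q ^ j) :
    HasSum f ((x + y) * (1 - q)⁻¹) := by
  have hgeom := hasSum_geometric_of_abs_lt_one hq
  rw [add_mul]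
  refine HasSum.even_add_odd ?_ ?_
  · simpa only [heven] using hgeom.mul_left x
  · simpa only [hodd] using hgeom.mul_left y

section InterlacedGeometric

variable {a : ℕ → ℝ} {x y q : ℝ}

lemma tsum_tail_of_odd_index_of_interlaced_geometric (hq : |q| < 1)
    (hodd : ∀ m, a (2 * m + 1) = x * q ^ m) (heven : ∀ m, a (2 * m + 2) = y * q ^ m) (m : ℕ) :
    ∑' k, a (2 * m + 1 + 1 + k) = (y + x * q) * (1 - q)⁻¹ * q ^ m := by
  refine (hasSum_of_even_odd_geometric (x := y * q ^ m) (y := x * q ^ m * q) hq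
    (fun j => ?_) (fun j => ?_)).tsum_eq.trans (by ring)
  · rw [show 2 * m + 1 + 1 + 2 * j = 2 * (m + j) + 2 by ring, heven, pow_add, mul_assoc]
  · rw [show 2 * m + 1 + 1 + (2 * j + 1) = 2 * (m + j + 1) + 1 by ring, hodd]
    ring

lemma tsum_tail_of_even_index_of_interlaced_geometric (hq : |q| < 1)
    (hodd : ∀ m, a (2 * m + 1) = x * q ^ m) (heven : ∀ m, a (2 * m + 2) = y * q ^ m) (m : ℕ) :
    ∑' k, a (2 * m + 2 + 1 + k) = (x + y) * q * (1 - q)⁻¹ * q ^ m := by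
  refine (hasSum_of_even_odd_geometric (x := x * q ^ m * q) (y := y * q ^ m * q) hq
    (fun j => ?_) (fun j => ?_)).tsum_eq.trans (by ring)
  · rw [show 2 * m + 2 + 1 + 2 * j = 2 * (m + j + 1) + 1 by ring, hodd]
    ring
  · rw [show 2 * m + 2 + 1 + (2 * j + 1) = 2 * (m + j + 1) + 2 by ring, heven]
    ring

end InterlacedGeometric

theorem stmt14_general (a : ℕ → ℝ)
    (h1 : a 1 = 3/4)
    (h2 : ∀ n : ℕ, 1 ≤ n → a (2 * n) = (1/2) * (1/4 : ℝ) ^ (n - 1))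
    (h3 : ∀ n : ℕ, 1 ≤ n → a (2 * n + 1) = (3/4) * (1/4 : ℝ) ^ n) :
    ∀ n : ℕ, 1 ≤ n → (a n > ∑' k : ℕ, a (n + 1 + k) ↔ Even n) := by
  have hodd (m : ℕ) : a (2 * m + 1) = 3/4 * (1/4 : ℝ) ^ m := by
    rcases m.eq_zero_or_pos with rfl | hm
    · simpa using h1
    · exact h3 m hm
  have heven (m : ℕ) : a (2 * m + 2) = 1/2 * (1/4 : ℝ) ^ m := h2 (m + 1) (by omega)
  have hq : |(1/4 : ℝ)| < 1 := by norm_num [abs_of_pos]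
  intro n hn
  obtain ⟨m, rfl | rfl⟩ : ∃ m, n = 2 * m + 1 ∨ n = 2 * m + 2 := ⟨(n - 1) / 2, by omega⟩
  · rw [tsum_tail_of_odd_index_of_interlaced_geometric hq hodd heven, hodd]
    refine iff_of_false (fun h => ?_) (by simp [parity_simps])
    nlinarith [pow_pos (by norm_num : (0 : ℝ) < 1/4) m]
  · rw [tsum_tail_of_even_index_of_interlaced_geometric hq hodd heven, heven]
    refine iff_of_true ?_ ⟨m + 1, by ring⟩
    nlinarith [pow_pos (by norm_num : (0 : ℝ) < 1/4) m]

/-- For the Guthrie–Nymann sequence `(3,2;1/4)`: `a 1 = 3/4`, `a (2n) = (1/2)·4^{1-n}`,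
`a (2n+1) = (3/4)·4^{-n}`. Then `a n > r n` if and only if `n` is even. -/
theorem stmt14 (a : ℕ → ℝ) (hsum : Summable a)
    (h1 : a 1 = 3/4)
    (h2 : ∀ n : ℕ, 1 ≤ n → a (2 * n) = (1/2) * (1/4 : ℝ) ^ (n - 1))
    (h3 : ∀ n : ℕ, 1 ≤ n → a (2 * n + 1) = (3/4) * (1/4 : ℝ) ^ n) :
    ∀ n : ℕ, 1 ≤ n → (a n > ∑' k : ℕ, a (n + 1 + k) ↔ Even n) :=
  stmt14_general a h1 h2 h3
end

section
/- (Kakeya) Let (a_n) be a nonincreasing sequence of positive reals with convergent sum and suppose a_n > r_n for all n, where r_n = \sum_{k>n} a_k. Then the achievement set E = {\sum_{n\in A} a_n : A \subseteq \mathbb{N}} has empty interior. -/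
/-!
Cut the series after `n` terms. Every subsum lies within `tailSum a n` above the partial subsum
of its first `n` terms, so the achievement set is covered by finitely many closed intervals of
length `tailSum a n`. The hypothesis `a n > tailSum a (n + 1)` makes any two distinct partial
subsums differ by more than `tailSum a n`, so these intervals are pairwise disjoint. An open
interval is connected, so if it lies in the achievement set it lies in a single one of them;
its length is therefore at most `tailSum a n` for every `n`, which tends to `0`.
-/

open Filter Topology Set

theorem IsPreconnected.exists_subset_of_subset_biUnion {ι α : Type*} [TopologicalSpace α]
    {S : Set α} (hS : IsPreconnected S) (hne : S.Nonempty) {I : Set ι} (hI : I.Finite)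
    {F : ι → Set α} (hF : ∀ i ∈ I, IsClosed (F i)) (hdisj : I.PairwiseDisjoint F)
    (hsub : S ⊆ ⋃ i ∈ I, F i) : ∃ i ∈ I, S ⊆ F i := by
  obtain ⟨x, hxS⟩ := hne
  obtain ⟨i, hi, hxi⟩ := mem_iUnion₂.1 (hsub hxS)
  set V := ⋃ j ∈ I \ {i}, F j
  have hV : IsClosed V := hI.sdiff.isClosed_biUnion fun j hj => hF j hj.1
  have hcover : S ⊆ F i ∪ V := fun y hy => by
    obtain ⟨j, hj, hyj⟩ := mem_iUnion₂.1 (hsub hy)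
    by_cases hji : j = i
    · exact Or.inl (hji ▸ hyj)
    · exact Or.inr (mem_iUnion₂.2 ⟨j, ⟨hj, hji⟩, hyj⟩)
  have hdisjV : F i ∩ V = ∅ := by
    refine disjoint_iff_inter_eq_empty.1 (disjoint_iUnion₂_right.2 fun j hj => ?_)
    exact hdisj hi hj.1 (Ne.symm hj.2)
  rcases isPreconnected_iff_subset_of_disjoint_closed.1 hS _ _ (hF i hi) hV hcover
    (by rw [hdisjV, inter_empty]) with hSi | hSV
  · exact ⟨i, hi, hSi⟩
  · exact absurd (hdisjV ▸ mem_inter hxi (hSV hxS)) (notMem_empty x)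

theorem sub_le_of_Ioo_subset_biUnion_Icc {C : Set ℝ} (hC : C.Finite) {δ : ℝ}
    (hsep : C.Pairwise fun c d => δ < |c - d|) {u v : ℝ} (huv : u < v)
    (hsub : Ioo u v ⊆ ⋃ c ∈ C, Icc c (c + δ)) : v - u ≤ δ := by
  have hdisj : C.PairwiseDisjoint fun c => Icc c (c + δ) := fun c hc d hd hcd =>
    Set.disjoint_left.2 fun y hyc hyd => by
      have : δ < |c - d| := hsep hc hd hcd
      rw [lt_abs] at this
      simp only [mem_Icc] at hyc hyd
      rcases this with h | h <;> linarith
  obtain ⟨c, -, hc⟩ := isPreconnected_Ioo.exists_subset_of_subset_biUnion (nonempty_Ioo.2 huv)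
    hC (fun c _ => isClosed_Icc) hdisj hsub
  have := (Icc_subset_Icc_iff huv.le).1 (closure_Ioo huv.ne ▸ closure_minimal hc isClosed_Icc)
  linarith

-- The tail from index `n` on, so the paper's `r n` is `tailSum a (n + 1)`.
noncomputable def tailSum (a : ℕ → ℝ) (n : ℕ) : ℝ := ∑' k, a (n + k)

noncomputable def partialSubsum (a : ℕ → ℝ) (A : Set ℕ) (n : ℕ) : ℝ :=
  ∑ i ∈ Finset.range n, A.indicator a i

theorem tendsto_tailSum_atTop (a : ℕ → ℝ) : Tendsto (tailSum a) atTop (𝓝 0) :=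
  (tendsto_sum_nat_add a).congr fun n => tsum_congr fun k => by rw [add_comm]

section

variable {a : ℕ → ℝ}

theorem tailSum_eq_add_tailSum_succ (hsum : Summable a) (n : ℕ) :
    tailSum a n = a n + tailSum a (n + 1) := by
  have hshift : Summable fun k => a (n + k) :=
    ((summable_nat_add_iff n).2 hsum).congr fun k => by rw [add_comm]
  rw [tailSum, hshift.tsum_eq_zero_add, tailSum]
  simp only [add_zero, add_assoc, add_comm 1]

theorem partialSubsum_inter_Iio (A : Set ℕ) (n : ℕ) :
    partialSubsum a (A ∩ Iio n) n = partialSubsum a A n := by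
  refine Finset.sum_congr rfl fun i hi => ?_
  rw [inter_comm, ← indicator_indicator, indicator_of_mem (mem_Iio.2 (Finset.mem_range.1 hi))]

theorem finite_range_partialSubsum (n : ℕ) :
    (range fun A => partialSubsum a A n).Finite := by
  refine ((finite_Iio n).powerset.image fun A => partialSubsum a A n).subset ?_
  rintro _ ⟨A, rfl⟩
  exact ⟨A ∩ Iio n, inter_subset_right, partialSubsum_inter_Iio A n⟩

theorem tsum_subtype_mem_Icc_partialSubsum (ha : ∀ n, 0 ≤ a n) (hsum : Summable a)
    (A : Set ℕ) (n : ℕ) :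
    ∑' i : A, a i ∈ Icc (partialSubsum a A n) (partialSubsum a A n + tailSum a n) := by
  have hind : Summable (A.indicator a) := hsum.indicator A
  have hsplit := hind.sum_add_tsum_nat_add n
  have htail_nonneg : 0 ≤ ∑' k, A.indicator a (k + n) :=
    tsum_nonneg fun k => indicator_nonneg (fun j _ => ha j) _
  have htail_le : ∑' k, A.indicator a (k + n) ≤ tailSum a n := by
    refine Summable.tsum_le_tsum (fun k => ?_) ((summable_nat_add_iff n).2 hind)
      (((summable_nat_add_iff n).2 hsum).congr fun k => by rw [add_comm])
    rw [add_comm n k]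
    exact indicator_le_self' (fun j _ => ha j) _
  rw [tsum_subtype, ← hsplit, partialSubsum]
  exact ⟨by linarith, by linarith⟩

theorem tailSum_lt_abs_sub_partialSubsum (ha : ∀ n, 0 ≤ a n) (hsum : Summable a)
    (hdom : ∀ n, tailSum a (n + 1) < a n) {A B : Set ℕ} (n : ℕ)
    (hAB : partialSubsum a A n ≠ partialSubsum a B n) :
    tailSum a n < |partialSubsum a A n - partialSubsum a B n| := by
  induction n with
  | zero => simp [partialSubsum] at hAB
  | succ n ih =>
    set x := partialSubsum a A n - partialSubsum a B n
    set y := A.indicator a n - B.indicator a n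
    have hxy : partialSubsum a A (n + 1) - partialSubsum a B (n + 1) = x + y := by
      simp only [x, y, partialSubsum, Finset.sum_range_succ]
      ring
    have hy : y = 0 ∨ |y| = a n := by
      rcases indicator_eq_zero_or_self A a n with hA | hA <;>
        rcases indicator_eq_zero_or_self B a n with hB | hB <;>
        simp [y, hA, hB, abs_of_nonneg (ha n)]
    rw [hxy]
    by_cases hx : x = 0
    · have hy0 : y ≠ 0 := fun hy0 => hAB (sub_eq_zero.1 (by rw [hxy, hx, hy0, add_zero]))
      rw [hx, zero_add, hy.resolve_left hy0]
      exact hdom n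
    · have hx_lt := ih (sub_ne_zero.1 hx)
      have hy_le : |y| ≤ a n := by
        rcases hy with hy | hy
        · rw [hy, abs_zero]; exact ha n
        · exact hy.le
      rw [tailSum_eq_add_tailSum_succ hsum n] at hx_lt
      linarith [abs_sub_abs_le_abs_add x y]

end

theorem stmt18_general (a : ℕ → ℝ) (hpos : ∀ n, 0 < a n) (hsum : Summable a)
    (h : ∀ n : ℕ, (∑' k : ℕ, a (n + 1 + k)) < a n) :
    interior {x : ℝ | ∃ A : Set ℕ, x = ∑' n : A, a n} = ∅ := by
  have ha : ∀ n, 0 ≤ a n := fun n => (hpos n).le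
  refine eq_empty_of_forall_notMem fun x hx => ?_
  obtain ⟨ε, hε, hball⟩ := Metric.isOpen_iff.1 isOpen_interior x hx
  obtain ⟨n, hn⟩ :=
    ((tendsto_tailSum_atTop a).eventually (gt_mem_nhds (by linarith : 0 < 2 * ε))).exists
  have hcover : Ioo (x - ε) (x + ε) ⊆
      ⋃ c ∈ range fun A => partialSubsum a A n, Icc c (c + tailSum a n) := by
    rintro y hy
    obtain ⟨A, rfl⟩ := interior_subset (hball (Real.ball_eq_Ioo x ε ▸ hy))
    exact mem_iUnion₂.2 ⟨_, mem_range_self A, tsum_subtype_mem_Icc_partialSubsum ha hsum A n⟩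
  have hsep : (range fun A => partialSubsum a A n).Pairwise fun c d => tailSum a n < |c - d| := by
    rintro _ ⟨A, rfl⟩ _ ⟨B, rfl⟩ hAB
    exact tailSum_lt_abs_sub_partialSubsum ha hsum h n hAB
  have := sub_le_of_Ioo_subset_biUnion_Icc (finite_range_partialSubsum n) hsep (by linarith) hcover
  linarith

/-- (Kakeya) If `(a n)` is a nonincreasing sequence of positive reals with convergent sum
and `a n > r n` for all `n`, then the achievement set has empty interior. -/
theorem stmt18 (a : ℕ → ℝ) (hpos : ∀ n, 0 < a n) (hmono : Antitone a) (hsum : Summable a)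
    (h : ∀ n : ℕ, (∑' k : ℕ, a (n + 1 + k)) < a n) :
    interior {x : ℝ | ∃ A : Set ℕ, x = ∑' n : A, a n} = ∅ :=
  stmt18_general a hpos hsum h
end

section
/- (Kakeya) Let (a_n) be a nonincreasing sequence of positive reals with convergent sum and suppose a_n \le r_n for all n, where r_n = \sum_{k>n} a_k. Then the achievement set E(a_n) equals the interval [0, \sum_n a_n]. -/
/-!
Greedy expansion: run through the terms in order and take `a n` whenever it does not push the
partial sum above the target `x`. The partial sums never exceed `x`, and before step `n` the
deficit stays below the tail `∑' k, a (n + k)`: when `a n` is taken the deficit and the tail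
both drop by `a n`, and when it is refused the deficit is less than `a n ≤ ∑' k, a (n + 1 + k)`.
Since the tails tend to `0`, the partial sums converge to `x`.
-/

open Filter Topology

theorem tsum_subtype_mem_Icc {β : Type*} {f : β → ℝ} (hf : ∀ b, 0 ≤ f b) (hsum : Summable f)
    (A : Set β) : ∑' b : A, f b ∈ Set.Icc 0 (∑' b, f b) := by
  rw [tsum_subtype]
  exact ⟨tsum_nonneg fun b => Set.indicator_nonneg (fun b _ => hf b) b,
    (hsum.indicator A).tsum_le_tsum (Set.indicator_le_self' fun b _ => hf b) hsum⟩

theorem Summable.tsum_nat_add_eq_add_tsum_succ_add {a : ℕ → ℝ} (hsum : Summable a) (n : ℕ) :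
    ∑' k, a (n + k) = a n + ∑' k, a (n + 1 + k) := by
  have hshift : Summable fun k => a (n + k) := by
    simpa only [add_comm n] using (summable_nat_add_iff n).2 hsum
  rw [hshift.tsum_eq_zero_add]
  simp only [add_zero, add_assoc, add_comm 1]

namespace Greedy

variable (a : ℕ → ℝ) (x : ℝ)

noncomputable def partialSum : ℕ → ℝ
  | 0 => 0
  | n + 1 => partialSum n + if partialSum n + a n ≤ x then a n else 0

def set : Set ℕ := {n | partialSum a x n + a n ≤ x}

theorem partialSum_eq_sum_indicator (n : ℕ) :
    partialSum a x n = ∑ k ∈ Finset.range n, (set a x).indicator a k := by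
  induction n with
  | zero => rfl
  | succ n ih =>
    rw [Finset.sum_range_succ, ← ih, partialSum]
    by_cases htake : n ∈ set a x
    · rw [Set.indicator_of_mem htake, if_pos (show partialSum a x n + a n ≤ x from htake)]
    · rw [Set.indicator_of_notMem htake, if_neg (show ¬partialSum a x n + a n ≤ x from htake)]

variable {a x}

theorem partialSum_le_and_sub_le_tail (hsum : Summable a)
    (h : ∀ n : ℕ, a n ≤ ∑' k : ℕ, a (n + 1 + k)) (hx0 : 0 ≤ x) (hx : x ≤ ∑' n, a n) (n : ℕ) :
    partialSum a x n ≤ x ∧ x - partialSum a x n ≤ ∑' k, a (n + k) := by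
  induction n with
  | zero => simpa [partialSum] using ⟨hx0, hx⟩
  | succ n ih =>
    have htail := hsum.tsum_nat_add_eq_add_tsum_succ_add n
    by_cases htake : partialSum a x n + a n ≤ x
    · rw [partialSum, if_pos htake]
      exact ⟨htake, by linarith [ih.2]⟩
    · rw [partialSum, if_neg htake, add_zero]
      exact ⟨ih.1, by linarith [h n]⟩

theorem tendsto_partialSum (hsum : Summable a) (h : ∀ n : ℕ, a n ≤ ∑' k : ℕ, a (n + 1 + k))
    (hx0 : 0 ≤ x) (hx : x ≤ ∑' n, a n) : Tendsto (partialSum a x) atTop (𝓝 x) := by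
  have hinv := partialSum_le_and_sub_le_tail hsum h hx0 hx
  have htail : Tendsto (fun n => ∑' k, a (n + k)) atTop (𝓝 0) := by
    simpa only [add_comm] using tendsto_sum_nat_add a
  have hdeficit : Tendsto (fun n => x - partialSum a x n) atTop (𝓝 0) :=
    squeeze_zero (fun n => sub_nonneg.2 (hinv n).1) (fun n => (hinv n).2) htail
  simpa using hdeficit.const_sub x

theorem tsum_set (hsum : Summable a) (h : ∀ n : ℕ, a n ≤ ∑' k : ℕ, a (n + 1 + k))
    (hx0 : 0 ≤ x) (hx : x ≤ ∑' n, a n) : ∑' n : set a x, a n = x := by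
  rw [tsum_subtype]
  refine tendsto_nhds_unique (hsum.indicator _).hasSum.tendsto_sum_nat ?_
  rw [← funext (partialSum_eq_sum_indicator a x)]
  exact tendsto_partialSum hsum h hx0 hx

end Greedy

theorem stmt19_general (a : ℕ → ℝ) (hpos : ∀ n, 0 < a n) (hsum : Summable a)
    (h : ∀ n : ℕ, a n ≤ ∑' k : ℕ, a (n + 1 + k)) :
    {x : ℝ | ∃ A : Set ℕ, x = ∑' n : A, a n} = Set.Icc 0 (∑' n, a n) := by
  refine Set.Subset.antisymm ?_ fun x hx => ?_
  · rintro _ ⟨A, rfl⟩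
    exact tsum_subtype_mem_Icc (fun n => (hpos n).le) hsum A
  · exact ⟨Greedy.set a x, (Greedy.tsum_set hsum h hx.1 hx.2).symm⟩

/-- (Kakeya) If `(a n)` is a nonincreasing sequence of positive reals with convergent sum
and `a n ≤ r n` for all `n`, then the achievement set equals `[0, ∑ a n]`. -/
theorem stmt19 (a : ℕ → ℝ) (hpos : ∀ n, 0 < a n) (hmono : Antitone a) (hsum : Summable a)
    (h : ∀ n : ℕ, a n ≤ ∑' k : ℕ, a (n + 1 + k)) :
    {x : ℝ | ∃ A : Set ℕ, x = ∑' n : A, a n} = Set.Icc 0 (∑' n, a n) :=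
  stmt19_general a hpos hsum h
end
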